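/- Let C be a symmetric monoidal category with unit object 𝟙 having finite colimits and such that the tensor product preserves finite colimits in each variable. Let (C₁, c₁) and (C₂, c₂) be coidempotent objects, and form the pushout V of the span C₁ ← C₁ ⊗ C₂ → C₂, where the two legs are id_{C₁} ⊗ c₂ (followed by the right unitor) and c₁ ⊗ id_{C₂} (followed by the left unitor); let v : V → 𝟙 be the morphism induced by c₁ and c₂. Then (V, v) is a coidempotent object, and it is a least upper bound of (C₁, c₁) and (C₂, c₂) in the preorder of coidempotent objects: both admit morphisms of coidempotent objects to (V, v), and any coidempotent object (D, d) admitting morphisms of coidempotent objects from both (C₁, c₁) and (C₂, c₂) admits one from (V, v). -/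

import Mathlib

open CategoryTheory CategoryTheory.Limits MonoidalCategory

universe v u

variable {C : Type u} [Category.{v} C] [MonoidalCategory C]

/-- `c : C₀ ⟶ 𝟙` is a coidempotent object if `C₀ ◁ c : C₀ ⊗ C₀ ⟶ C₀ ⊗ 𝟙` is invertible. -/
def Coidempotent {C₀ : C} (c : C₀ ⟶ 𝟙_ C) : Prop := IsIso (C₀ ◁ c)

/-- The first leg `C₁ ⊗ C₂ ⟶ C₁` (i.e. `id_{C₁} ⊗ c₂` followed by the right unitor) of the
span whose pushout computes the join of two coidempotent objects. -/
def joinFst {C₁ C₂ : C} (_ : C₁ ⟶ 𝟙_ C) (c₂ : C₂ ⟶ 𝟙_ C) : C₁ ⊗ C₂ ⟶ C₁ :=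
  (C₁ ◁ c₂) ≫ (ρ_ C₁).hom

/-- The second leg `C₁ ⊗ C₂ ⟶ C₂` (i.e. `c₁ ⊗ id_{C₂}` followed by the left unitor) of the
span whose pushout computes the join of two coidempotent objects. -/
def joinSnd {C₁ C₂ : C} (c₁ : C₁ ⟶ 𝟙_ C) (_ : C₂ ⟶ 𝟙_ C) : C₁ ⊗ C₂ ⟶ C₂ :=
  (c₁ ▷ C₂) ≫ (λ_ C₂).hom

/-!
Whiskering with `C₁` makes the leg `joinSnd` invertible (as `C₁ ◁ c₁` is), hence also
`C₁ ◁ pushout.inl`, since `C₁ ⊗ -` preserves pushouts; as `pushout.inl ≫ v = c₁`, the map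
`C₁ ◁ v` is invertible. Likewise `C₂ ◁ v` and `(C₁ ⊗ C₂) ◁ v` are invertible, and since `- ⊗ V`
and `- ⊗ 𝟙` preserve the pushout `V`, so is `V ◁ v`.

For the universal property, a coidempotent `(D, d)` in a braided category satisfies
`D ◁ d ≫ ρ = d ▷ D ≫ λ` (the dual of a lemma of Boyarchenko–Drinfeld on idempotents); this is
exactly the compatibility needed for maps `C₁ ⟶ D`, `C₂ ⟶ D` over `𝟙` to descend to `V`.
-/

theorem NatTrans.isIso_app_colimit {J 𝒜 ℬ : Type*} [Category J] [Category 𝒜] [Category ℬ]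
    {F G : 𝒜 ⥤ ℬ} (α : F ⟶ G) (K : J ⥤ 𝒜) [HasColimit K] [PreservesColimit K F]
    [PreservesColimit K G] [∀ j, IsIso (α.app (K.obj j))] : IsIso (α.app (colimit K)) := by
  have hF := isColimitOfPreserves F (colimit.isColimit K)
  have hG := isColimitOfPreserves G (colimit.isColimit K)
  have : ∀ j, IsIso ((Functor.whiskerLeft K α).app j) := fun j => by dsimp; infer_instance
  have : IsIso (Functor.whiskerLeft K α) := NatIso.isIso_of_isIso_app _
  have : α.app (colimit K) =
      (hF.coconePointsIsoOfNatIso hG (asIso (Functor.whiskerLeft K α))).hom :=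
    hF.hom_ext fun j => by
      rw [IsColimit.comp_coconePointsIsoOfNatIso_hom]
      exact α.naturality _
  rw [this]
  infer_instance

theorem isIso_map_pushout_inl {𝒜 ℬ : Type*} [Category 𝒜] [Category ℬ] (F : 𝒜 ⥤ ℬ) {W Y Z : 𝒜}
    (f : W ⟶ Y) (g : W ⟶ Z) [HasPushout f g] [PreservesColimit (span f g) F]
    [IsIso (F.map g)] : IsIso (F.map (pushout.inl f g)) := by
  have := hasPushout_of_preservesPushout F f g
  rw [← PreservesPushout.inl_iso_hom]
  infer_instance

theorem isIso_map_pushout_inr {𝒜 ℬ : Type*} [Category 𝒜] [Category ℬ] (F : 𝒜 ⥤ ℬ) {W Y Z : 𝒜}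
    (f : W ⟶ Y) (g : W ⟶ Z) [HasPushout f g] [PreservesColimit (span f g) F]
    [IsIso (F.map f)] : IsIso (F.map (pushout.inr f g)) := by
  have := hasPushout_of_preservesPushout F f g
  rw [← PreservesPushout.inr_iso_hom]
  infer_instance

theorem isIso_tensor_whiskerLeft (X : C) {Y Z W : C} (c : Z ⟶ W) [IsIso (Y ◁ c)] :
    IsIso ((X ⊗ Y) ◁ c) := by
  rw [tensor_whiskerLeft]
  infer_instance

theorem isIso_whiskerLeft_of_iso {X X' Y W : C} (e : X ≅ X') (c : Y ⟶ W) [IsIso (X ◁ c)] :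
    IsIso (X' ◁ c) := by
  have : X' ◁ c = e.inv ▷ Y ≫ X ◁ c ≫ e.hom ▷ W := by
    rw [whisker_exchange, ← comp_whiskerRight_assoc, Iso.inv_hom_id, id_whiskerRight,
      Category.id_comp]
  rw [this]
  infer_instance

theorem isIso_whiskerLeft_of_isIso_comp {X Y Z W : C} (i : Y ⟶ Z) (v : Z ⟶ W) [IsIso (X ◁ i)]
    [IsIso (X ◁ (i ≫ v))] : IsIso (X ◁ v) := by
  rw [MonoidalCategory.whiskerLeft_comp] at *
  exact IsIso.of_isIso_comp_left (X ◁ i) (X ◁ v)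

namespace Coidempotent

variable [BraidedCategory C] {A : C} {d : A ⟶ 𝟙_ C}

theorem isIso_whiskerRight (h : Coidempotent d) : IsIso (d ▷ A) := by
  have : IsIso (A ◁ d) := h
  have : d ▷ A = (β_ A A).hom ≫ A ◁ d ≫ (β_ (𝟙_ C) A).inv := by
    rw [← BraidedCategory.braiding_naturality_left_assoc, Iso.hom_inv_id, Category.comp_id]
  rw [this]
  infer_instance

theorem whiskerLeft_comp_rightUnitor_hom (h : Coidempotent d) :
    A ◁ d ≫ (ρ_ A).hom = d ▷ A ≫ (λ_ A).hom := by
  have : IsIso (A ◁ d) := h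
  have := h.isIso_whiskerRight
  have : IsIso (d ▷ (A ⊗ A)) := by rw [whiskerRight_tensor]; infer_instance
  -- `p` and `q` are invertible; naturality of `p` gives `A ◁ p = A ◁ q`, then naturality of `q`
  -- gives `p = q`.
  set p := A ◁ d ≫ (ρ_ A).hom
  set q := d ▷ A ≫ (λ_ A).hom
  have hp : (α_ A A A).hom ≫ A ◁ p ≫ p = (α_ A A A).hom ≫ A ◁ q ≫ p :=
    calc (α_ A A A).hom ≫ A ◁ p ≫ p = ((A ⊗ A) ◁ d ≫ (ρ_ (A ⊗ A)).hom) ≫ p := by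
          simp only [p]; monoidal
      _ = p ▷ A ≫ p := by
          rw [Category.assoc, ← rightUnitor_naturality, ← whisker_exchange_assoc]
      _ = (α_ A A A).hom ≫ A ◁ q ≫ p := by simp only [p, q]; monoidal
  have hpq : A ◁ p = A ◁ q := (cancel_mono p).mp ((cancel_epi (α_ A A A).hom).mp hp)
  have hq (φ : A ⊗ A ⟶ A) : (d ▷ (A ⊗ A) ≫ (λ_ (A ⊗ A)).hom) ≫ φ = A ◁ φ ≫ q := by
    rw [Category.assoc, ← leftUnitor_naturality, whisker_exchange_assoc]
  exact (cancel_epi (d ▷ (A ⊗ A) ≫ (λ_ (A ⊗ A)).hom)).mp (by rw [hq, hq, hpq])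

end Coidempotent

section Join

variable {C₁ C₂ : C} {c₁ : C₁ ⟶ 𝟙_ C} {c₂ : C₂ ⟶ 𝟙_ C}

theorem isIso_whiskerLeft_joinSnd (h₁ : Coidempotent c₁) : IsIso (C₁ ◁ joinSnd c₁ c₂) := by
  have : IsIso (C₁ ◁ c₁) := h₁
  have : IsIso (C₁ ◁ c₁ ▷ C₂) := by rw [whisker_assoc_symm]; infer_instance
  rw [joinSnd, MonoidalCategory.whiskerLeft_comp]
  infer_instance

theorem isIso_whiskerLeft_joinFst [BraidedCategory C] (h₂ : Coidempotent c₂) :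
    IsIso (C₂ ◁ joinFst c₁ c₂) := by
  have : IsIso (C₂ ◁ c₂) := h₂
  have : IsIso ((C₁ ⊗ C₂) ◁ c₂) := isIso_tensor_whiskerLeft C₁ c₂
  have : IsIso ((C₂ ⊗ C₁) ◁ c₂) := isIso_whiskerLeft_of_iso (β_ C₁ C₂) c₂
  have : IsIso (C₂ ◁ C₁ ◁ c₂) := by rw [tensor_whiskerLeft_symm]; infer_instance
  rw [joinFst, MonoidalCategory.whiskerLeft_comp]
  infer_instance

theorem Coidempotent.join [BraidedCategory C] [HasPushout (joinFst c₁ c₂) (joinSnd c₁ c₂)]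
    [∀ X : C, PreservesColimit (span (joinFst c₁ c₂) (joinSnd c₁ c₂)) (tensorLeft X)]
    (h₁ : Coidempotent c₁) (h₂ : Coidempotent c₂)
    {v : pushout (joinFst c₁ c₂) (joinSnd c₁ c₂) ⟶ 𝟙_ C}
    (hv₁ : pushout.inl _ _ ≫ v = c₁) (hv₂ : pushout.inr _ _ ≫ v = c₂) : Coidempotent v := by
  have : IsIso ((tensorLeft C₁).map (joinSnd c₁ c₂)) := isIso_whiskerLeft_joinSnd h₁
  have : IsIso ((tensorLeft C₂).map (joinFst c₁ c₂)) := isIso_whiskerLeft_joinFst h₂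
  have : IsIso (C₁ ◁ pushout.inl (joinFst c₁ c₂) (joinSnd c₁ c₂)) :=
    isIso_map_pushout_inl (tensorLeft C₁) _ _
  have : IsIso (C₂ ◁ pushout.inr (joinFst c₁ c₂) (joinSnd c₁ c₂)) :=
    isIso_map_pushout_inr (tensorLeft C₂) _ _
  have : IsIso (C₁ ◁ (pushout.inl _ _ ≫ v)) := by rw [hv₁]; exact h₁
  have : IsIso (C₂ ◁ (pushout.inr _ _ ≫ v)) := by rw [hv₂]; exact h₂
  have : IsIso (C₁ ◁ v) := isIso_whiskerLeft_of_isIso_comp (pushout.inl _ _) v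
  have : IsIso (C₂ ◁ v) := isIso_whiskerLeft_of_isIso_comp (pushout.inr _ _) v
  have : IsIso ((C₁ ⊗ C₂) ◁ v) := isIso_tensor_whiskerLeft C₁ v
  -- `V ◁ v` is the component at `V` of `(- ◁ v) : tensorRight V ⟶ tensorRight (𝟙_ C)`.
  have (j : WalkingSpan) : IsIso (((tensoringRight C).map v).app
      ((span (joinFst c₁ c₂) (joinSnd c₁ c₂)).obj j)) := by
    rcases j with (_ | _ | _) <;> assumption
  exact NatTrans.isIso_app_colimit ((tensoringRight C).map v) (span _ _)

theorem joinFst_comp_eq_tensorHom_comp {D : C} {d : D ⟶ 𝟙_ C} {f₁ : C₁ ⟶ D} {f₂ : C₂ ⟶ D}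
    (hf₂ : f₂ ≫ d = c₂) : joinFst c₁ c₂ ≫ f₁ = (f₁ ⊗ₘ f₂) ≫ D ◁ d ≫ (ρ_ D).hom := by
  rw [MonoidalCategory.tensorHom_def, Category.assoc, ← MonoidalCategory.whiskerLeft_comp_assoc,
    hf₂, ← whisker_exchange_assoc, rightUnitor_naturality, joinFst, Category.assoc]

theorem joinSnd_comp_eq_tensorHom_comp {D : C} {d : D ⟶ 𝟙_ C} {f₁ : C₁ ⟶ D} {f₂ : C₂ ⟶ D}
    (hf₁ : f₁ ≫ d = c₁) : joinSnd c₁ c₂ ≫ f₂ = (f₁ ⊗ₘ f₂) ≫ d ▷ D ≫ (λ_ D).hom := by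
  rw [MonoidalCategory.tensorHom_def', Category.assoc, ← comp_whiskerRight_assoc, hf₁,
    whisker_exchange_assoc, leftUnitor_naturality, joinSnd, Category.assoc]

theorem Coidempotent.joinFst_comp_eq_joinSnd_comp [BraidedCategory C] {D : C} {d : D ⟶ 𝟙_ C}
    (hd : Coidempotent d) {f₁ : C₁ ⟶ D} {f₂ : C₂ ⟶ D} (hf₁ : f₁ ≫ d = c₁) (hf₂ : f₂ ≫ d = c₂) :
    joinFst c₁ c₂ ≫ f₁ = joinSnd c₁ c₂ ≫ f₂ := by
  rw [joinFst_comp_eq_tensorHom_comp hf₂, joinSnd_comp_eq_tensorHom_comp hf₁,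
    hd.whiskerLeft_comp_rightUnitor_hom]

end Join

theorem coidempotent_join_general [SymmetricCategory C] [HasFiniteColimits C]
    (hL : ∀ X : C, PreservesFiniteColimits (tensorLeft X))
    {C₁ C₂ : C} (c₁ : C₁ ⟶ 𝟙_ C) (c₂ : C₂ ⟶ 𝟙_ C)
    (h₁ : Coidempotent c₁) (h₂ : Coidempotent c₂)
    (v : pushout (joinFst c₁ c₂) (joinSnd c₁ c₂) ⟶ 𝟙_ C)
    (hv₁ : pushout.inl _ _ ≫ v = c₁) (hv₂ : pushout.inr _ _ ≫ v = c₂) :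
    Coidempotent v ∧
      (∃ f : C₁ ⟶ pushout (joinFst c₁ c₂) (joinSnd c₁ c₂), f ≫ v = c₁) ∧
      (∃ f : C₂ ⟶ pushout (joinFst c₁ c₂) (joinSnd c₁ c₂), f ≫ v = c₂) ∧
      ∀ {D : C} (d : D ⟶ 𝟙_ C), Coidempotent d →
        (∃ f : C₁ ⟶ D, f ≫ d = c₁) → (∃ f : C₂ ⟶ D, f ≫ d = c₂) →
        ∃ g : pushout (joinFst c₁ c₂) (joinSnd c₁ c₂) ⟶ D, g ≫ d = v := by
  refine ⟨h₁.join h₂ hv₁ hv₂, ⟨_, hv₁⟩, ⟨_, hv₂⟩, ?_⟩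
  rintro D d hd ⟨f₁, hf₁⟩ ⟨f₂, hf₂⟩
  refine ⟨pushout.desc f₁ f₂ (hd.joinFst_comp_eq_joinSnd_comp hf₁ hf₂), ?_⟩
  ext
  · rw [pushout.inl_desc_assoc, hf₁, hv₁]
  · rw [pushout.inr_desc_assoc, hf₂, hv₂]

/-- Let `C` be a symmetric monoidal category with finite colimits whose
tensor product preserves finite colimits in each variable.  Given coidempotent objects
`(C₁, c₁)` and `(C₂, c₂)`, let `V` be the pushout of `C₁ ⟵ C₁ ⊗ C₂ ⟶ C₂` (legs as above)
and `v : V ⟶ 𝟙` the morphism induced by `c₁` and `c₂`.  Then `(V, v)` is a coidempotent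
object and is a least upper bound of `(C₁, c₁)` and `(C₂, c₂)` in the preorder of
coidempotent objects. -/
theorem coidempotent_join [SymmetricCategory C] [HasFiniteColimits C]
    (hL : ∀ X : C, PreservesFiniteColimits (tensorLeft X))
    (hR : ∀ X : C, PreservesFiniteColimits (tensorRight X))
    {C₁ C₂ : C} (c₁ : C₁ ⟶ 𝟙_ C) (c₂ : C₂ ⟶ 𝟙_ C)
    (h₁ : Coidempotent c₁) (h₂ : Coidempotent c₂)
    (v : pushout (joinFst c₁ c₂) (joinSnd c₁ c₂) ⟶ 𝟙_ C)
    (hv₁ : pushout.inl _ _ ≫ v = c₁) (hv₂ : pushout.inr _ _ ≫ v = c₂) :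
    Coidempotent v ∧
      (∃ f : C₁ ⟶ pushout (joinFst c₁ c₂) (joinSnd c₁ c₂), f ≫ v = c₁) ∧
      (∃ f : C₂ ⟶ pushout (joinFst c₁ c₂) (joinSnd c₁ c₂), f ≫ v = c₂) ∧
      ∀ {D : C} (d : D ⟶ 𝟙_ C), Coidempotent d →
        (∃ f : C₁ ⟶ D, f ≫ d = c₁) → (∃ f : C₂ ⟶ D, f ≫ d = c₂) →
        ∃ g : pushout (joinFst c₁ c₂) (joinSnd c₁ c₂) ⟶ D, g ≫ d = v :=
  coidempotent_join_general hL c₁ c₂ h₁ h₂ v hv₁ hv₂
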